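/- arXiv:1808.01898 — 2 statements merged into one kernel-verified Lean document; each statement's English description precedes it below -/
import Mathlib

section
/- (Raabe's test, divergent case) If (a_n) is a sequence of nonzero reals with lim_{n→∞} n(|a_{n+1}/a_n| − 1) = α and α > −1, then ∑_{k=1}^n |a_k| → ∞, and moreover ∑_{k=1}^n |a_k| ∼ n|a_n|/(α+1) as n → ∞. -/
open Filter Topology Finset Asymptotics

/-! Write `b = |a|`. Raabe's condition gives `((n + 1) b (n + 1) - n b n) / b (n + 1) → α + 1 > 0`,
so `n b n` is eventually increasing; hence `b n ≥ c / n` eventually and `∑ b` diverges like the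
harmonic series. The Stolz–Cesàro theorem then turns the ratio of increments into
`n b n / ∑_{k=1}^n b k → α + 1`. -/

theorem tendsto_one_of_tendsto_natCast_mul_sub_one {r : ℕ → ℝ} {α : ℝ}
    (h : Tendsto (fun n : ℕ => (n : ℝ) * (r n - 1)) atTop (𝓝 α)) :
    Tendsto r atTop (𝓝 1) := by
  have h0 : Tendsto (fun n : ℕ => r n - 1) atTop (𝓝 0) := by
    have := h.mul (tendsto_inv_atTop_zero.comp tendsto_natCast_atTop_atTop)
    rw [mul_zero] at this
    refine this.congr' ?_
    filter_upwards [eventually_ne_atTop 0] with n hn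
    simp only [Function.comp_apply]
    field_simp
  simpa using h0.add_const 1

theorem Filter.Tendsto.sum_range_div_sum_range {f g : ℕ → ℝ} {L : ℝ}
    (h : Tendsto (fun n => f n / g n) atTop (𝓝 L)) (hg : ∀ n, 0 < g n)
    (hsum : Tendsto (fun n => ∑ k ∈ range n, g k) atTop atTop) :
    Tendsto (fun n => (∑ k ∈ range n, f k) / ∑ k ∈ range n, g k) atTop (𝓝 L) := by
  have hlo : (fun n => f n - L * g n) =o[atTop] g := by
    rw [isLittleO_iff_tendsto fun n hn => absurd hn (hg n).ne']
    simpa using (h.sub_const L).congr fun n => by field_simp [(hg n).ne']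
  have := ((hlo.sum_range fun n => (hg n).le) hsum).tendsto_div_nhds_zero.add_const L
  rw [zero_add] at this
  refine this.congr' ?_
  filter_upwards [hsum.eventually_gt_atTop 0] with n hn
  rw [sum_sub_distrib, ← mul_sum]
  field_simp
  ring

theorem not_summable_of_eventually_le_natCast_mul {b : ℕ → ℝ} (hb : ∀ n, 0 < b n)
    (h : ∀ᶠ n : ℕ in atTop, (n : ℝ) * b n ≤ (n + 1) * b (n + 1)) : ¬ Summable b := by
  obtain ⟨N, hN⟩ := eventually_atTop.1 (h.and (eventually_ge_atTop 1))
  set c := (N : ℝ) * b N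
  have hc : 0 < c := mul_pos (by exact_mod_cast (hN N le_rfl).2) (hb N)
  have hmono : MonotoneOn (fun n : ℕ => (n : ℝ) * b n) (Set.Ici N) :=
    monotoneOn_nat_Ici_of_le_succ fun n hn => by exact_mod_cast (hN n hn).1
  have hinv : (fun n : ℕ => (n : ℝ)⁻¹) =O[atTop] b := by
    refine IsBigO.of_bound c⁻¹ ?_
    filter_upwards [eventually_ge_atTop N] with n hn
    have hn0 : (0 : ℝ) < n := by exact_mod_cast (hN N le_rfl).2.trans hn
    have hcn : c ≤ n * b n := hmono (Set.mem_Ici.2 le_rfl) (Set.mem_Ici.2 hn) hn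
    have hcb : c / n ≤ b n := (div_le_iff₀ hn0).2 (by linarith [mul_comm (n : ℝ) (b n)])
    rw [Real.norm_of_nonneg (inv_nonneg.2 hn0.le), Real.norm_of_nonneg (hb n).le]
    calc (n : ℝ)⁻¹ = c⁻¹ * (c / n) := by field_simp
      _ ≤ c⁻¹ * b n := by gcongr
  exact fun hs => Real.not_summable_natCast_inv (summable_of_isBigO_nat hs hinv)

theorem tendsto_succ_mul_sub_mul_div_of_raabe {b : ℕ → ℝ} {α : ℝ} (hb : ∀ n, b n ≠ 0)
    (h : Tendsto (fun n : ℕ => (n : ℝ) * (b (n + 1) / b n - 1)) atTop (𝓝 α)) :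
    Tendsto (fun n : ℕ => ((n + 1) * b (n + 1) - n * b n) / b (n + 1)) atTop (𝓝 (α + 1)) := by
  have := (h.div (tendsto_one_of_tendsto_natCast_mul_sub_one h) one_ne_zero).const_add 1
  rw [div_one, add_comm] at this
  refine this.congr fun n => ?_
  simp only [Pi.div_apply]
  field_simp [hb n, hb (n + 1)]
  ring

theorem stmt_6 (a : ℕ → ℝ) (hne : ∀ n, a n ≠ 0) (α : ℝ) (hα : -1 < α)
    (h : Tendsto (fun n : ℕ => (n : ℝ) * (|a (n + 1) / a n| - 1)) atTop (𝓝 α)) :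
    Tendsto (fun n : ℕ => ∑ k ∈ Finset.Icc 1 n, |a k|) atTop atTop ∧
      Tendsto (fun n : ℕ => (∑ k ∈ Finset.Icc 1 n, |a k|) / ((n : ℝ) * |a n| / (α + 1)))
        atTop (𝓝 1) := by
  set b : ℕ → ℝ := fun n => |a n|
  have hb : ∀ n, 0 < b n := fun n => abs_pos.2 (hne n)
  have hα1 : 0 < α + 1 := by linarith
  have hd := tendsto_succ_mul_sub_mul_div_of_raabe (fun n => (hb n).ne')
    (h.congr fun n => by rw [abs_div])
  have hmono : ∀ᶠ n : ℕ in atTop, (n : ℝ) * b n ≤ (n + 1) * b (n + 1) := by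
    filter_upwards [hd.eventually_const_lt hα1] with n hn
    exact sub_nonneg.1 ((div_pos_iff_of_pos_right (hb _)).1 hn).le
  have hdiv : Tendsto (fun n => ∑ k ∈ range n, b (k + 1)) atTop atTop :=
    (not_summable_iff_tendsto_nat_atTop_of_nonneg fun n => (hb _).le).1
      (mt (summable_nat_add_iff 1).1 (not_summable_of_eventually_le_natCast_mul hb hmono))
  have hsum : ∀ n, ∑ k ∈ Icc 1 n, |a k| = ∑ k ∈ range n, b (k + 1) := fun n => by
    rw [← Ico_add_one_right_eq_Icc, sum_Ico_eq_sum_range]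
    simp only [b, Nat.add_sub_cancel, add_comm 1]
  have htel : ∀ n : ℕ, ∑ k ∈ range n, (((k : ℝ) + 1) * b (k + 1) - k * b k) = n * b n := fun n => by
    simpa using sum_range_sub (fun k : ℕ => (k : ℝ) * b k) n
  have hstolz := hd.sum_range_div_sum_range (fun n => hb (n + 1)) hdiv
  simp only [htel] at hstolz
  refine ⟨hdiv.congr fun n => (hsum n).symm, ?_⟩
  have := (hstolz.inv₀ hα1.ne').const_mul (α + 1)
  rw [mul_inv_cancel₀ hα1.ne'] at this
  refine this.congr fun n => ?_
  rw [hsum, inv_div, div_div_eq_mul_div, mul_div_assoc, mul_div_left_comm]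
end

section
/- Suppose α(n) := n(|a_{n+1}/a_n| − 1) → α, and b(n) ≥ 1 is an increasing sequence tending to infinity such that b(n)(α(n) − α) is bounded and ∑_{k≥k₀} 1/(k·b(k)) < ∞. Then |a_n| ∼ C n^α for some constant C > 0; hence ∑ |a_n| converges if and only if α < −1. -/
open Filter Topology Real

/-! Write `|a (n+1)| / |a n| = 1 + α / n + δ n`; the bound on `b n * (α n - α)` makes `δ n` at most
`M / (n * b n)`, hence summable. Then `c n = log |a n| - α log n` has increments
`log (1 + α / n + δ n) - α log (1 + 1 / n)`, which differ from `δ n` by `O(1 / n ^ 2 + δ n ^ 2)`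
since `log (1 + x) = x + O(x ^ 2)`. So `c n` converges, i.e. `|a n| / n ^ α → exp (lim c) > 0`,
and `∑ |a n|` converges together with `∑ n ^ α`. -/

lemma abs_log_one_add_sub_self_le {x : ℝ} (hx : -1 / 2 ≤ x) : |log (1 + x) - x| ≤ 2 * x ^ 2 := by
  have hpos : 0 < 1 + x := by linarith
  have hupper : log (1 + x) ≤ x := by linarith [log_le_sub_one_of_pos hpos]
  have hlower : x - log (1 + x) ≤ x ^ 2 / (1 + x) := by
    have h := one_sub_inv_le_log_of_pos hpos
    have hsq : x ^ 2 / (1 + x) = x - (1 - (1 + x)⁻¹) := by field_simp; ring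
    linarith
  have hquot : x ^ 2 / (1 + x) ≤ 2 * x ^ 2 := by
    rw [div_le_iff₀ hpos]; nlinarith [sq_nonneg x]
  rw [abs_sub_comm, abs_of_nonneg (by linarith)]
  linarith

lemma Summable.sq {ι : Type*} {f : ι → ℝ} (hf : Summable f) : Summable fun i => f i ^ 2 := by
  refine .of_norm_bounded_eventually hf.abs ?_
  filter_upwards [hf.abs.tendsto_cofinite_zero.eventually_le_const one_pos]
    with i hi
  rw [norm_pow, Real.norm_eq_abs, pow_two]
  exact mul_le_of_le_one_left (abs_nonneg _) hi

lemma summable_log_one_add_sub_self {ι : Type*} {x : ι → ℝ} (hx : Summable fun i => x i ^ 2) :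
    Summable fun i => log (1 + x i) - x i := by
  refine .of_norm_bounded_eventually (hx.mul_left 2) ?_
  filter_upwards [hx.tendsto_cofinite_zero.eventually_lt_const (by norm_num : (0 : ℝ) < 1 / 4)]
    with i hi
  have : -1 / 2 ≤ x i := by nlinarith [sq_nonneg (x i + 1 / 2)]
  exact abs_log_one_add_sub_self_le this

lemma tendsto_add_tsum_succ_sub {E : Type*} [AddCommGroup E] [TopologicalSpace E]
    [IsTopologicalAddGroup E] {u : ℕ → E} (h : Summable fun n => u (n + 1) - u n) :
    Tendsto u atTop (𝓝 (u 0 + ∑' n, (u (n + 1) - u n))) := by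
  have := h.hasSum.tendsto_sum_nat.const_add (u 0)
  simpa only [Finset.sum_range_sub, add_sub_cancel] using this

lemma log_natCast_add_one_sub_log (n : ℕ) :
    log (n + 1) - log n = log (1 + (n : ℝ)⁻¹) := by
  rcases Nat.eq_zero_or_pos n with rfl | hn
  · simp
  · have hn : (n : ℝ) ≠ 0 := by positivity
    rw [← log_div (by positivity) hn, add_div, div_self hn, one_div]

theorem exists_tendsto_div_rpow_of_summable_ratio_sub {p : ℕ → ℝ} {α : ℝ} (hp : ∀ n, 0 < p n)
    (h : Summable fun n : ℕ => p (n + 1) / p n - 1 - α / n) :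
    ∃ C, 0 < C ∧ Tendsto (fun n : ℕ => p n / (n : ℝ) ^ α) atTop (𝓝 C) := by
  set δ : ℕ → ℝ := fun n => p (n + 1) / p n - 1 - α / n
  set c : ℕ → ℝ := fun n => log (p n) - α * log n
  have hinv : Summable fun n : ℕ => ((n : ℝ)⁻¹) ^ 2 := by
    simpa only [inv_pow] using Real.summable_nat_pow_inv.2 one_lt_two
  have hx : Summable fun n : ℕ => (α * (n : ℝ)⁻¹ + δ n) ^ 2 := by
    refine .of_nonneg_of_le (fun n => sq_nonneg _) (fun n => ?_)
      (((hinv.mul_left (α ^ 2)).add h.sq).mul_left 2)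
    nlinarith [sq_nonneg (α * (n : ℝ)⁻¹ - δ n)]
  -- valid also at `n = 0`, thanks to `log 0 = 0` and `(0 : ℝ)⁻¹ = 0`
  have hincr : ∀ n, c (n + 1) - c n = (log (1 + (α * (n : ℝ)⁻¹ + δ n)) - (α * (n : ℝ)⁻¹ + δ n))
      + δ n - α * (log (1 + (n : ℝ)⁻¹) - (n : ℝ)⁻¹) := by
    intro n
    have hratio : p (n + 1) / p n = 1 + (α * (n : ℝ)⁻¹ + δ n) := by simp only [δ]; ring
    simp only [c]
    push_cast
    rw [← log_natCast_add_one_sub_log, ← hratio, log_div (hp _).ne' (hp _).ne']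
    ring
  have hc : Summable fun n => c (n + 1) - c n := by
    simp_rw [hincr]
    exact ((summable_log_one_add_sub_self hx).add h).sub
      ((summable_log_one_add_sub_self hinv).mul_left α)
  refine ⟨_, exp_pos _, ((continuous_exp.tendsto _).comp (tendsto_add_tsum_succ_sub hc)).congr' ?_⟩
  filter_upwards [eventually_ge_atTop 1] with n hn
  have hn : (0 : ℝ) < n := by exact_mod_cast hn
  simp only [Function.comp, c]
  rw [exp_sub, exp_log (hp n), rpow_def_of_pos hn, mul_comm α]

theorem stmt_17_general (a : ℕ → ℝ) (hne : ∀ n, a n ≠ 0) (α : ℝ)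
    (b : ℕ → ℝ) (hb1 : ∀ n, 1 ≤ b n)
    (hbdd : ∃ M : ℝ, ∀ n, |b n * ((n : ℝ) * (|a (n + 1) / a n| - 1) - α)| ≤ M)
    (hsum : Summable (fun k : ℕ => 1 / ((k : ℝ) * b k))) :
    (∃ C : ℝ, 0 < C ∧ Tendsto (fun n : ℕ => |a n| / (n : ℝ) ^ α) atTop (𝓝 C)) ∧
      (Summable (fun n => |a n|) ↔ α < -1) := by
  obtain ⟨M, hM⟩ := hbdd
  have hratio : Summable fun n : ℕ => |a (n + 1)| / |a n| - 1 - α / n := by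
    refine .of_norm_bounded_eventually_nat (hsum.mul_left M) ?_
    filter_upwards [eventually_ge_atTop 1] with n hn
    have hn : (0 : ℝ) < n := by exact_mod_cast hn
    have hb : 0 < b n := zero_lt_one.trans_le (hb1 n)
    have hdiff : |a (n + 1)| / |a n| - 1 - α / n = (n * (|a (n + 1) / a n| - 1) - α) / n := by
      rw [abs_div]; field_simp
    have hMn := hM n
    rw [abs_mul, abs_of_pos hb] at hMn
    rw [hdiff, norm_div, Real.norm_eq_abs, Real.norm_eq_abs, abs_of_pos hn, mul_one_div,
      div_le_div_iff₀ hn (mul_pos hn hb)]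
    nlinarith
  obtain ⟨C, hC, hlim⟩ :=
    exists_tendsto_div_rpow_of_summable_ratio_sub (fun n => abs_pos.2 (hne n)) hratio
  refine ⟨⟨C, hC, hlim⟩, ?_⟩
  rw [← Real.summable_nat_rpow]
  exact (Asymptotics.isTheta_of_div_tendsto_nhds_ne_zero hlim hC.ne').symm.summable_iff_nat

theorem stmt_17 (a : ℕ → ℝ) (hne : ∀ n, a n ≠ 0) (α : ℝ)
    (h : Tendsto (fun n : ℕ => (n : ℝ) * (|a (n + 1) / a n| - 1)) atTop (𝓝 α))
    (b : ℕ → ℝ) (hb1 : ∀ n, 1 ≤ b n) (hbmono : Monotone b)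
    (hbtop : Tendsto b atTop atTop)
    (hbdd : ∃ M : ℝ, ∀ n, |b n * ((n : ℝ) * (|a (n + 1) / a n| - 1) - α)| ≤ M)
    (hsum : Summable (fun k : ℕ => 1 / ((k : ℝ) * b k))) :
    (∃ C : ℝ, 0 < C ∧ Tendsto (fun n : ℕ => |a n| / (n : ℝ) ^ α) atTop (𝓝 C)) ∧
      (Summable (fun n => |a n|) ↔ α < -1) :=
  stmt_17_general a hne α b hb1 hbdd hsum
end
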